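/- Let R be a commutative ring and let K = D^perf(R) be the homotopy category of bounded complexes of finitely generated projective R-modules. Then the ring homomorphisms λ : R → End(K) (sending r to the family of multiplication-by-r endomorphisms) and σ : End(K) → R (sending α to α_𝟙 ∈ End_K(𝟙) ≅ R, where 𝟙 is R concentrated in degree zero) induce mutually inverse ring isomorphisms between the reduced ring R_red = R/Nil(R) and the quotient End(K)/PNil(K). -/

import Mathlib

/-!
If `β ∈ End(D^perf(R))` vanishes on `𝟙 = R[0]`, then `β` is pointwise nilpotent. Naturality
along the maps `R → M, 1 ↦ m` makes `β` vanish on `M[0]` for every finitely generated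
projective `M`, and compatibility with the translation spreads this to every `M[d]`.
A complex `Y` concentrated in degrees `[a, a + n)` sits in the degreewise split sequence
`σ_{≥ a+1} Y → Y → Y^a[-a]`. By induction `β^(n-1)` kills `σ_{≥ a+1} Y`, while `β` followed
by the projection to `Y^a[-a]` vanishes because `β` does on `Y^a[-a]`; a map of the first kind
followed by one of the second is null-homotopic, so `β^n = 0` on `Y`.

Applied to `λ(σ(α)) - α`, which vanishes on `𝟙` because `End(𝟙) ≅ R`, this shows that `λ ∘ σ`
is the identity modulo pointwise nilpotents; the other claims are direct computations.
-/

namespace Balmer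

open CategoryTheory CategoryTheory.Limits

universe u

variable (R : Type u) [CommRing R]

/-- The homotopy category of cochain complexes of `R`-modules. -/
abbrev HtpyCat := HomotopyCategory (ModuleCat.{u} R) (ComplexShape.up ℤ)

/-- The objects of `D^perf(R) = K^b(P(R))`: those complexes of `R`-modules which are
bounded and degreewise finitely generated projective. -/
def IsPerf (X : HtpyCat R) : Prop :=
  (∃ a b : ℤ, ∀ i : ℤ, (i < a ∨ b < i) → IsZero (X.as.X i)) ∧
  (∀ i : ℤ, Module.Finite R (X.as.X i) ∧ Module.Projective R (X.as.X i))

/-- `D^perf(R)`, the homotopy category of bounded complexes of finitely generated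
projective `R`-modules, as a full subcategory of the homotopy category. -/
abbrev Dperf := ObjectProperty.FullSubcategory (IsPerf R)

/-- The complex `𝟙 = (⋯ → 0 → R → 0 → ⋯)` concentrated in degree zero, as an object
of the homotopy category. -/
noncomputable def oneCplx : HtpyCat R :=
  (HomotopyCategory.quotient (ModuleCat.{u} R) (ComplexShape.up ℤ)).obj
    ((HomologicalComplex.single (ModuleCat.{u} R) (ComplexShape.up ℤ) 0).obj
      (ModuleCat.of R R))

variable {R}

/-- The `n`-fold composition of an endomorphism with itself. -/
def endPow {X : HtpyCat R} (f : X ⟶ X) : ℕ → (X ⟶ X)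
  | 0 => 𝟙 X
  | (n + 1) => endPow f n ≫ f

/-- An endomorphism of the identity functor of `D^perf(R)` which commutes with the
translation (the shift of complexes, inherited from the homotopy category). -/
structure REnd (R : Type u) [CommRing R] where
  app : ∀ X : Dperf R, X.obj ⟶ X.obj
  natural : ∀ {X Y : Dperf R} (f : X.obj ⟶ Y.obj), f ≫ app Y = app X ≫ f
  shift : ∀ (X Y : Dperf R) (e : Y.obj ≅ (shiftFunctor (HtpyCat R) (1 : ℤ)).obj X.obj),
    app Y = e.hom ≫ (shiftFunctor (HtpyCat R) (1 : ℤ)).map (app X) ≫ e.inv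

/-- Multiplication (composition) in `End(D^perf(R))`. -/
def REnd.mul (α β : REnd R) : REnd R where
  app X := α.app X ≫ β.app X
  natural {X Y} f := by
    try dsimp only
    rw [← Category.assoc, α.natural f, Category.assoc, β.natural f, ← Category.assoc]
  shift X Y e := by
    try dsimp only
    rw [α.shift X Y e, β.shift X Y e]
    simp only [Category.assoc, Iso.inv_hom_id_assoc, ← Functor.map_comp_assoc]

/-- The unit of `End(D^perf(R))`. -/
def REnd.one : REnd R where
  app X := 𝟙 X.obj
  natural {X Y} f := by (try dsimp only); rw [Category.comp_id, Category.id_comp]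
  shift X Y e := by (try dsimp only); rw [CategoryTheory.Functor.map_id]; simp

/-- Addition in `End(D^perf(R))`. -/
def REnd.add (α β : REnd R) : REnd R where
  app X := α.app X + β.app X
  natural {X Y} f := by
    try dsimp only
    rw [Preadditive.comp_add, Preadditive.add_comp, α.natural f, β.natural f]
  shift X Y e := by
    try dsimp only
    rw [Functor.map_add, α.shift X Y e, β.shift X Y e]
    simp [Preadditive.comp_add, Preadditive.add_comp]

/-- `α ∈ End(D^perf(R))` is pointwise nilpotent if each `α_X` is nilpotent. -/
def REnd.PNil (α : REnd R) : Prop :=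
  ∀ X : Dperf R, ∃ n : ℕ, endPow (α.app X) (n + 1) = 0

open HomologicalComplex

section StupidTrunc

variable {V : Type*} [Category V] [Preadditive V] [HasZeroObject V]

open ZeroObject

noncomputable def stupidTruncGE (C : CochainComplex V ℤ) (t : ℤ) : CochainComplex V ℤ where
  X i := if t ≤ i then C.X i else 0
  d i j := if h : t ≤ i ∧ t ≤ j then
    eqToHom (if_pos h.1) ≫ C.d i j ≫ eqToHom (if_pos h.2).symm else 0
  shape i j hij := by
    rw [C.shape i j hij]
    split_ifs <;> simp
  d_comp_d' i j k hij hjk := by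
    by_cases h : t ≤ i ∧ t ≤ j
    · have h' : t ≤ j ∧ t ≤ k := ⟨h.2, by simp only [ComplexShape.up_Rel] at hjk; omega⟩
      rw [dif_pos h, dif_pos h']
      simp
    · rw [dif_neg h, zero_comp]

variable {C : CochainComplex V ℤ} {t i : ℤ}

lemma stupidTruncGE_X_of_le (h : t ≤ i) : (stupidTruncGE C t).X i = C.X i := if_pos h

lemma isZero_stupidTruncGE_X_of_lt (h : i < t) : IsZero ((stupidTruncGE C t).X i) := by
  rw [show (stupidTruncGE C t).X i = 0 from if_neg (by omega)]
  exact isZero_zero V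

lemma stupidTruncGE_d_of_le {j : ℤ} (hi : t ≤ i) (hj : t ≤ j) :
    (stupidTruncGE C t).d i j =
      eqToHom (stupidTruncGE_X_of_le hi) ≫ C.d i j ≫ eqToHom (stupidTruncGE_X_of_le hj).symm :=
  dif_pos ⟨hi, hj⟩

variable (C t) in
noncomputable def ιStupidTruncGE : stupidTruncGE C t ⟶ C where
  f i := if h : t ≤ i then eqToHom (stupidTruncGE_X_of_le h) else 0
  comm' i j hij := by
    by_cases h : t ≤ i
    · have h' : t ≤ j := by simp only [ComplexShape.up_Rel] at hij; omega
      rw [dif_pos h, dif_pos h', stupidTruncGE_d_of_le h h']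
      simp
    · rw [dif_neg h, zero_comp,
        show (stupidTruncGE C t).d i j = 0 from dif_neg (fun hc => h hc.1), zero_comp]

lemma ιStupidTruncGE_f_of_le (h : t ≤ i) :
    (ιStupidTruncGE C t).f i = eqToHom (stupidTruncGE_X_of_le h) := dif_pos h

end StupidTrunc

section TruncationSequence

variable {V : Type*} [Category V] [Preadditive V]

lemma comp_eq_zero_of_f_eq_zero_of_ge {C D E : CochainComplex V ℤ} {a : ℤ}
    (hC : ∀ i < a, IsZero (C.X i)) {h : C ⟶ D} (hh : ∀ i, a + 1 ≤ i → h.f i = 0)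
    {g : D ⟶ E} {k : D.X (a + 1) ⟶ E.X a} (hg : g.f a = D.d a (a + 1) ≫ k) : h ≫ g = 0 := by
  ext i
  rw [comp_f, zero_f]
  rcases lt_trichotomy i a with hlt | rfl | hgt
  · exact (hC i hlt).eq_of_src _ _
  · rw [hg, ← Category.assoc, h.comm, hh _ le_rfl, comp_zero, zero_comp]
  · rw [hh i hgt, zero_comp]

variable [HasZeroObject V]

open HomotopyCategory

lemma exists_quotient_map_eq_and_f_eq_zero_of_ge {C D : CochainComplex V ℤ} {t : ℤ}
    {h : C ⟶ D} (hh : (quotient V _).map (ιStupidTruncGE C t ≫ h) = 0) :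
    ∃ h' : C ⟶ D, (quotient V _).map h' = (quotient V _).map h ∧ ∀ i, t ≤ i → h'.f i = 0 := by
  have s := homotopyOfEq _ _ (hh.trans ((quotient V _).map_zero _ _).symm)
  let σ : ∀ i j : ℤ, (ComplexShape.up ℤ).Rel j i → (C.X i ⟶ D.X j) := fun i j _ =>
    if hi : t ≤ i then eqToHom (stupidTruncGE_X_of_le hi).symm ≫ s.hom i j else 0
  refine ⟨h - Homotopy.nullHomotopicMap' σ, ?_, fun i hi => ?_⟩
  · rw [(quotient V _).map_sub, HomotopyCategory.eq_of_homotopy _ 0 (Homotopy.nullHomotopy' σ),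
      (quotient V _).map_zero, sub_zero]
  have hcomm := s.comm i
  rw [dNext_eq s.hom (show (ComplexShape.up ℤ).Rel i (i + 1) by simp),
    prevD_eq s.hom (show (ComplexShape.up ℤ).Rel (i - 1) i by simp)] at hcomm
  simp only [HomologicalComplex.comp_f, HomologicalComplex.zero_f, add_zero] at hcomm
  rw [ιStupidTruncGE_f_of_le hi, stupidTruncGE_d_of_le hi (by omega)] at hcomm
  rw [HomologicalComplex.sub_f_apply, Homotopy.nullHomotopicMap'_f
    (show (ComplexShape.up ℤ).Rel (i - 1) i by simp)
    (show (ComplexShape.up ℤ).Rel i (i + 1) by simp), sub_eq_zero]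
  simp only [σ, dif_pos hi, dif_pos (show t ≤ i + 1 by omega)]
  simpa only [Preadditive.comp_add, eqToHom_trans_assoc, eqToHom_refl, Category.id_comp,
    Category.assoc] using congrArg (eqToHom (stupidTruncGE_X_of_le hi).symm ≫ ·) hcomm

noncomputable def πSingleOfIsZero (C : CochainComplex V ℤ) {a : ℤ}
    (hC : ∀ i < a, IsZero (C.X i)) : C ⟶ (single V (ComplexShape.up ℤ) a).obj (C.X a) :=
  mkHomToSingle (𝟙 _) fun i hi => by
    rw [(hC i (by simp only [ComplexShape.up_Rel] at hi; omega)).eq_of_src (C.d i a) 0, zero_comp]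

lemma exists_f_eq_d_comp_of_comp_πSingleOfIsZero {C D : CochainComplex V ℤ} {a : ℤ}
    {hC : ∀ i < a, IsZero (C.X i)} {g : D ⟶ C}
    (hg : (quotient V _).map (g ≫ πSingleOfIsZero C hC) = 0) :
    ∃ k : D.X (a + 1) ⟶ C.X a, g.f a = D.d a (a + 1) ≫ k := by
  have s := homotopyOfEq _ _ (hg.trans ((quotient V _).map_zero _ _).symm)
  refine ⟨s.hom (a + 1) a ≫ (singleObjXSelf (ComplexShape.up ℤ) a (C.X a)).hom, ?_⟩
  have hcomm := s.comm a
  rw [dNext_eq s.hom (show (ComplexShape.up ℤ).Rel a (a + 1) by simp),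
    prevD_eq s.hom (show (ComplexShape.up ℤ).Rel (a - 1) a by simp)] at hcomm
  simp only [comp_f, πSingleOfIsZero, mkHomToSingle_f, single_obj_d, comp_zero, add_zero,
    zero_f, Category.id_comp] at hcomm
  rw [← Category.assoc, ← hcomm, Category.assoc, Iso.inv_hom_id, Category.comp_id]

-- `h` is modified within its homotopy class to vanish in degrees `≥ a + 1`, and `g` is
-- homotopic, in degree `a`, to a map factoring through the differential.
lemma quotient_map_comp_eq_zero {C D : CochainComplex V ℤ} {a : ℤ}
    (hC : ∀ i < a, IsZero (C.X i)) {h : C ⟶ D} {g : D ⟶ C}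
    (hh : (quotient V _).map (ιStupidTruncGE C (a + 1) ≫ h) = 0)
    (hg : (quotient V _).map (g ≫ πSingleOfIsZero C hC) = 0) :
    (quotient V _).map (h ≫ g) = 0 := by
  obtain ⟨h', hh'_eq, hh'⟩ := exists_quotient_map_eq_and_f_eq_zero_of_ge hh
  obtain ⟨k, hk⟩ := exists_f_eq_d_comp_of_comp_πSingleOfIsZero hg
  rw [Functor.map_comp, ← hh'_eq, ← Functor.map_comp,
    comp_eq_zero_of_f_eq_zero_of_ge hC hh' hk, Functor.map_zero]

end TruncationSequence

section SingleFunctor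

variable {V : Type*} [Category V] [Preadditive V] [HasZeroObject V]

lemma eq_of_homotopy_single {M N : V} {d : ℤ}
    {f g : (single V (ComplexShape.up ℤ) d).obj M ⟶ (single V _ d).obj N}
    (h : Homotopy f g) : f = g := by
  apply from_single_hom_ext
  have hc := h.comm d
  rw [dNext_eq h.hom (show (ComplexShape.up ℤ).Rel d (d + 1) by simp),
    prevD_eq h.hom (show (ComplexShape.up ℤ).Rel (d - 1) d by simp)] at hc
  simpa using hc

instance (d : ℤ) : (HomotopyCategory.singleFunctor V d).Faithful where
  map_injective h :=
    (single V _ d).map_injective (eq_of_homotopy_single (HomotopyCategory.homotopyOfEq _ _ h))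

instance (d : ℤ) : (HomotopyCategory.singleFunctor V d).Full :=
  inferInstanceAs (CochainComplex.singleFunctor V d ⋙ HomotopyCategory.quotient V _).Full

end SingleFunctor

lemma finite_projective_of_isZero {M : ModuleCat.{u} R} (h : IsZero M) :
    Module.Finite R M ∧ Module.Projective R M :=
  have := ModuleCat.subsingleton_of_isZero h
  ⟨inferInstance, inferInstance⟩

lemma isPerf_singleFunctor_obj (d : ℤ) (M : ModuleCat.{u} R) [Module.Finite R M]
    [Module.Projective R M] : IsPerf R ((HomotopyCategory.singleFunctor _ d).obj M) := by
  refine ⟨⟨d, d, fun i hi => isZero_single_obj_X _ d M i (by omega)⟩, fun i => ?_⟩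
  show Module.Finite R (((single _ (ComplexShape.up ℤ) d).obj M).X i) ∧
    Module.Projective R (((single _ (ComplexShape.up ℤ) d).obj M).X i)
  by_cases h : i = d
  · subst h
    rw [single_obj_X_self]
    exact ⟨‹_›, ‹_›⟩
  · exact finite_projective_of_isZero (isZero_single_obj_X _ d M i h)

lemma isPerf_stupidTruncGE (X : Dperf R) (t : ℤ) :
    IsPerf R ((HomotopyCategory.quotient _ _).obj (stupidTruncGE X.obj.as t)) := by
  obtain ⟨⟨a, b, hab⟩, hX⟩ := X.property
  refine ⟨⟨a, b, fun i hi => ?_⟩, fun i => ?_⟩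
  · show IsZero ((stupidTruncGE X.obj.as t).X i)
    by_cases h : t ≤ i
    · rw [stupidTruncGE_X_of_le h]
      exact hab i hi
    · exact isZero_stupidTruncGE_X_of_lt (by omega)
  · show Module.Finite R ((stupidTruncGE X.obj.as t).X i) ∧
      Module.Projective R ((stupidTruncGE X.obj.as t).X i)
    by_cases h : t ≤ i
    · rw [stupidTruncGE_X_of_le h]
      exact hX i
    · exact finite_projective_of_isZero (isZero_stupidTruncGE_X_of_lt (by omega))

variable (R) in
noncomputable def Dperf.single (d : ℤ) (M : ModuleCat.{u} R) [Module.Finite R M]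
    [Module.Projective R M] : Dperf R :=
  ⟨(HomotopyCategory.singleFunctor _ d).obj M, isPerf_singleFunctor_obj d M⟩

noncomputable def Dperf.stupidTruncGE (X : Dperf R) (t : ℤ) : Dperf R :=
  ⟨(HomotopyCategory.quotient _ _).obj (Balmer.stupidTruncGE X.obj.as t), isPerf_stupidTruncGE X t⟩

lemma endPow_eq_pow {X : HtpyCat R} (f : End X) (n : ℕ) : endPow f n = f ^ n := by
  induction n with
  | zero => rfl
  | succ n ih => rw [endPow, ih, pow_succ', End.mul_def]

lemma endPow_smul_id (r : R) (X : HtpyCat R) (n : ℕ) : endPow (r • 𝟙 X) n = r ^ n • 𝟙 X := by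
  induction n with
  | zero => simp [endPow]
  | succ n ih => simp [endPow, ih, smul_smul, pow_succ']

namespace REnd

@[ext]
lemma ext {α β : REnd R} (h : ∀ X, α.app X = β.app X) : α = β := by
  cases α; cases β; congr; funext X; exact h X

def sub (α β : REnd R) : REnd R where
  app X := α.app X - β.app X
  natural f := by rw [Preadditive.comp_sub, Preadditive.sub_comp, α.natural f, β.natural f]
  shift X Y e := by
    rw [Functor.map_sub, α.shift X Y e, β.shift X Y e]
    simp [Preadditive.comp_sub, Preadditive.sub_comp]

variable (β : REnd R)

lemma natural_endPow {X Y : Dperf R} (f : X.obj ⟶ Y.obj) (n : ℕ) :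
    f ≫ endPow (β.app Y) n = endPow (β.app X) n ≫ f := by
  induction n with
  | zero => simp [endPow]
  | succ n ih =>
    simp only [endPow]
    rw [← Category.assoc, ih, Category.assoc, β.natural f, Category.assoc]

lemma app_eq_zero_of_iso {X Y : Dperf R} (e : X.obj ≅ Y.obj) (h : β.app Y = 0) :
    β.app X = 0 := by
  rw [← cancel_mono e.hom, zero_comp, ← β.natural, h, comp_zero]

lemma app_eq_zero_iff_of_iso_shift {X Y : Dperf R}
    (e : Y.obj ≅ (shiftFunctor (HtpyCat R) (1 : ℤ)).obj X.obj) :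
    β.app Y = 0 ↔ β.app X = 0 := by
  rw [β.shift X Y e, Preadditive.IsIso.comp_left_eq_zero, Preadditive.IsIso.comp_right_eq_zero,
    Functor.map_eq_zero_iff]

variable {β}

lemma app_single_zero_eq_zero (h : β.app (Dperf.single R 0 (ModuleCat.of R R)) = 0)
    (M : ModuleCat.{u} R) [Module.Finite R M] [Module.Projective R M] :
    β.app (Dperf.single R 0 M) = 0 := by
  obtain ⟨b, hb⟩ :=
    (HomotopyCategory.singleFunctor _ 0).map_surjective (β.app (Dperf.single R 0 M))
  suffices b = 0 by rw [← hb, this]; exact Functor.map_zero _ _ _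
  ext m
  let f : ModuleCat.of R R ⟶ M := ModuleCat.ofHom (LinearMap.toSpanSingleton R M m)
  have hnat := β.natural (X := Dperf.single R 0 (ModuleCat.of R R)) (Y := Dperf.single R 0 M)
    ((HomotopyCategory.singleFunctor _ 0).map f)
  have hfb : f ≫ b = 0 := (HomotopyCategory.singleFunctor _ 0).map_injective <| by
    erw [Functor.map_comp, hb, hnat, h, zero_comp, Functor.map_zero]
    rfl
  simpa [f] using congrArg (fun φ : ModuleCat.of R R ⟶ M => φ.hom 1) hfb

lemma app_single_eq_zero (h : β.app (Dperf.single R 0 (ModuleCat.of R R)) = 0) (d : ℤ)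
    (M : ModuleCat.{u} R) [Module.Finite R M] [Module.Projective R M] :
    β.app (Dperf.single R d M) = 0 := by
  have shift_iff (k : ℤ) :
      β.app (Dperf.single R k M) = 0 ↔ β.app (Dperf.single R (k + 1) M) = 0 :=
    β.app_eq_zero_iff_of_iso_shift
      (((HomotopyCategory.singleFunctors _).shiftIso 1 k (k + 1) (by omega)).app M).symm
  induction d using Int.induction_on with
  | zero => exact app_single_zero_eq_zero h M
  | succ k ih => exact (shift_iff k).mp ih
  | pred k ih => exact (shift_iff (-k - 1)).mpr (by rwa [sub_add_cancel])

lemma endPow_app_eq_zero_of_isZero_X (h : β.app (Dperf.single R 0 (ModuleCat.of R R)) = 0)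
    (n : ℕ) (a : ℤ) (Y : Dperf R) (hY : ∀ i, i < a ∨ a + n ≤ i → IsZero (Y.obj.as.X i)) :
    endPow (β.app Y) n = 0 := by
  induction n generalizing a Y with
  | zero =>
    have hid : 𝟙 Y.obj.as = 0 :=
      HomologicalComplex.hom_ext _ _ fun i => (hY i (by omega)).eq_of_src _ _
    exact (congrArg (HomotopyCategory.quotient _ _).map hid).trans (Functor.map_zero _ _ _)
  | succ n ih =>
    set C := Y.obj.as
    have hC : ∀ i < a, IsZero (C.X i) := fun i hi => hY i (Or.inl hi)
    have hW : endPow (β.app (Y.stupidTruncGE (a + 1))) n = 0 := by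
      refine ih (a + 1) _ fun i hi => ?_
      show IsZero ((stupidTruncGE C (a + 1)).X i)
      by_cases hai : a + 1 ≤ i
      · rw [stupidTruncGE_X_of_le hai]
        exact hY i (Or.inr (by omega))
      · exact isZero_stupidTruncGE_X_of_lt (by omega)
    have := (Y.property.2 a).1
    have := (Y.property.2 a).2
    have hS := app_single_eq_zero h a (C.X a)
    obtain ⟨p, hp⟩ := (HomotopyCategory.quotient _ _).map_surjective (endPow (β.app Y) n)
    obtain ⟨g, hg⟩ := (HomotopyCategory.quotient _ _).map_surjective (β.app Y)
    have hpg : (HomotopyCategory.quotient _ _).map (p ≫ g) = 0 := by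
      apply quotient_map_comp_eq_zero hC
      · rw [Functor.map_comp, hp]
        refine (β.natural_endPow (X := Y.stupidTruncGE (a + 1)) _ n).trans ?_
        rw [hW]
        exact zero_comp
      · rw [Functor.map_comp, hg]
        refine (β.natural (Y := Dperf.single R a (C.X a)) _).symm.trans ?_
        rw [hS]
        exact comp_zero
    rw [Functor.map_comp, hp, hg] at hpg
    exact hpg

lemma pNil_of_app_single_zero_eq_zero (h : β.app (Dperf.single R 0 (ModuleCat.of R R)) = 0) :
    β.PNil := by
  intro X
  obtain ⟨⟨a, b, hab⟩, -⟩ := X.property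
  refine ⟨(b + 1 - a).toNat, ?_⟩
  show endPow (β.app X) _ ≫ β.app X = 0
  rw [endPow_app_eq_zero_of_isZero_X h _ a X fun i hi => hab i (by omega), zero_comp]

end REnd

/-- Proposition 8.1 (3): with `K = D^perf(R)`, the ring homomorphisms
`λ : R → End(K)` (multiplication) and `σ : End(K) → R` (evaluation at
`𝟙 = R[0]`, via `End_K(𝟙) ≅ R`) induce mutually inverse ring isomorphisms
`R_red ≅ End(K)/PNil(K)`: both are ring homomorphisms, `σ ∘ λ = id_R`,
`λ(σ(α))` agrees with `α` up to a pointwise nilpotent element, `σ` sends pointwise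
nilpotents into `Nil(R)` and `λ` sends `Nil(R)` into pointwise nilpotents. -/
theorem stmt19
    (one : Dperf R)
    (eone : one.obj ≅ oneCplx R)
    (ε : CategoryTheory.End one.obj ≃+* R)
    (hε : ∀ r : R, ε (r • 𝟙 one.obj) = r)
    (lam : R → REnd R) (hlam : ∀ (r : R) (X : Dperf R), (lam r).app X = r • 𝟙 X.obj)
    (sig : REnd R → R) (hsig : ∀ α : REnd R, sig α = ε (α.app one)) :
    (∀ r s : R, lam (r * s) = (lam r).mul (lam s)) ∧
    (∀ r s : R, lam (r + s) = (lam r).add (lam s)) ∧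
    lam 1 = REnd.one ∧
    (∀ α β : REnd R, sig (α.mul β) = sig α * sig β) ∧
    (∀ α β : REnd R, sig (α.add β) = sig α + sig β) ∧
    sig REnd.one = 1 ∧
    (∀ r : R, sig (lam r) = r) ∧
    (∀ α : REnd R, ∀ X : Dperf R, ∃ n : ℕ,
      endPow ((lam (sig α)).app X - α.app X) (n + 1) = 0) ∧
    (∀ α : REnd R, α.PNil → IsNilpotent (sig α)) ∧
    (∀ r : R, IsNilpotent r → (lam r).PNil) := by
  refine ⟨fun r s => ?_, fun r s => ?_, ?_, fun α β => ?_, fun α β => ?_, ?_, fun r => ?_,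
    fun α => ?_, fun α hα => ?_, fun r ⟨n, hn⟩ X => ⟨n, ?_⟩⟩
  · ext X
    simp [REnd.mul, hlam, smul_smul, mul_comm]
  · ext X
    simp [REnd.add, hlam, add_smul]
  · ext X
    simp [REnd.one, hlam]
  · rw [hsig, hsig, hsig, mul_comm, ← map_mul]
    rfl
  · rw [hsig, hsig, hsig, ← map_add]
    rfl
  · rw [hsig, ← map_one ε]
    rfl
  · rw [hsig, hlam, hε]
  · have hsub : ((lam (sig α)).sub α).app one = 0 := by
      apply ε.injective
      rw [map_zero, REnd.sub, map_sub, hlam, hε, hsig, sub_self]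
    -- `(Dperf.single R 0 (ModuleCat.of R R)).obj` is `oneCplx R` by definition
    exact REnd.pNil_of_app_single_zero_eq_zero (REnd.app_eq_zero_of_iso _ eone.symm hsub)
  · obtain ⟨m, hm⟩ := hα one
    exact ⟨m + 1, by rw [hsig, ← map_pow, ← endPow_eq_pow, hm, map_zero]⟩
  · rw [hlam, endPow_smul_id, pow_succ, hn, zero_mul, zero_smul]

end Balmer
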